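/- In the λ-calculus extended with the associative dot operator, for every intersection type τ: (1) every variable x belongs to Comp_τ; and (2) every term in Comp_τ is strongly normalizable. -/

import Mathlib

set_option maxHeartbeats 1000000

namespace CCV
mutual
inductive Tm : Type
| var (x : ℕ) : Tm
| lam (x : ℕ) (M : Tm) : Tm
| app (M N : Tm) : Tm
| lett (M : Tm) (x : ℕ) (N : Tm) : Tm
| mu (k : ℕ) (J : Jm) : Tm
inductive Jm : Type
| jmp (k : ℕ) (M : Tm) : Jm
| lett (J : Jm) (x : ℕ) (N : Tm) : Jm
end
def IsValue : Tm → Prop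
| .var _ => True
| .lam _ _ => True
| _ => False

def isVal : Tm → Bool
| .var _ => true
| .lam _ _ => true
| _ => false
mutual
def fvT : Tm → Finset ℕ
| .var x => {x}
| .lam x M => fvT M \ {x}
| .app M N => fvT M ∪ fvT N
| .lett M x N => (fvT M \ {x}) ∪ fvT N
| .mu _ J => fvJ J
def fvJ : Jm → Finset ℕ
| .jmp _ M => fvT M
| .lett J x N => (fvJ J \ {x}) ∪ fvT N
end
mutual
def fcT : Tm → Finset ℕ
| .var _ => ∅
| .lam _ M => fcT M
| .app M N => fcT M ∪ fcT N
| .lett M _ N => fcT M ∪ fcT N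
| .mu k J => fcJ J \ {k}
def fcJ : Jm → Finset ℕ
| .jmp k M => insert k (fcT M)
| .lett J _ N => fcJ J ∪ fcT N
end
mutual
def subT : Tm → ℕ → Tm → Tm
| .var y, x, V => if y = x then V else .var y
| .lam y M, x, V => if y = x then .lam y M else .lam y (subT M x V)
| .app M N, x, V => .app (subT M x V) (subT N x V)
| .lett M y N, x, V => .lett (if y = x then M else subT M x V) y (subT N x V)
| .mu k J, x, V => .mu k (subJ J x V)
def subJ : Jm → ℕ → Tm → Jm
| .jmp k M, x, V => .jmp k (subT M x V)
| .lett J y N, x, V => .lett (if y = x then J else subJ J x V) y (subT N x V)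
end
mutual
def renKT : Tm → ℕ → ℕ → Tm
| .var y, _, _ => .var y
| .lam y M, k, l => .lam y (renKT M k l)
| .app M N, k, l => .app (renKT M k l) (renKT N k l)
| .lett M y N, k, l => .lett (renKT M k l) y (renKT N k l)
| .mu m J, k, l => if m = k then .mu m J else .mu m (renKJ J k l)
def renKJ : Jm → ℕ → ℕ → Jm
| .jmp m M, k, l => .jmp (if m = k then l else m) (renKT M k l)
| .lett J y N, k, l => .lett (renKJ J k l) y (renKT N k l)
end
mutual
def csubT : Tm → ℕ → Tm → ℕ → Tm
| .var y, _, _, _ => .var y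
| .lam y P, k, M, x => .lam y (csubT P k M x)
| .app P Q, k, M, x => .app (csubT P k M x) (csubT Q k M x)
| .lett P y Q, k, M, x => .lett (csubT P k M x) y (csubT Q k M x)
| .mu m J, k, M, x => if m = k then .mu m J else .mu m (csubJ J k M x)
def csubJ : Jm → ℕ → Tm → ℕ → Jm
| .jmp m P, k, M, x =>
    if m = k then .jmp m (.lett M x (csubT P k M x)) else .jmp m (csubT P k M x)
| .lett J y Q, k, M, x => .lett (csubJ J k M x) y (csubT Q k M x)
end
mutual
inductive EqT : Tm → Tm → Prop
| refl (M) : EqT M M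
| symm : EqT M N → EqT N M
| trans : EqT M N → EqT N P → EqT M P
| assoc (L : Tm) (x : ℕ) (M : Tm) (y : ℕ) (N : Tm) :
    y ∉ fvT L → EqT (.lett L x (.lett M y N)) (.lett (.lett L x M) y N)
| lam : EqT M M' → EqT (.lam x M) (.lam x M')
| app : EqT M M' → EqT N N' → EqT (.app M N) (.app M' N')
| lett : EqT M M' → EqT N N' → EqT (.lett M x N) (.lett M' x N')
| mu : EqJ J J' → EqT (.mu k J) (.mu k J')
inductive EqJ : Jm → Jm → Prop
| refl (J) : EqJ J J
| symm : EqJ J J' → EqJ J' J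
| trans : EqJ J J' → EqJ J' J'' → EqJ J J''
| assoc (k : ℕ) (L : Tm) (x : ℕ) (M : Tm) :
    EqJ (.jmp k (.lett L x M)) (.lett (.jmp k L) x M)
| jmp : EqT M M' → EqJ (.jmp k M) (.jmp k M')
| lett : EqJ J J' → EqT N N' → EqJ (.lett J x N) (.lett J' x N')
end

mutual
/-- one-step reduction of the CCV λμ-calculus (on terms). -/
inductive RedT : Tm → Tm → Prop
| ad1 : ¬ IsValue N → z ∉ fvT N → z ∉ fvT M →
    RedT (.app N M) (.lett (.app (.var z) M) z N)
| ad2 : IsValue V → ¬ IsValue N → z ∉ fvT V → z ∉ fvT N →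
    RedT (.app V N) (.lett (.app V (.var z)) z N)
| beta_lam : IsValue V → RedT (.app (.lam x M) V) (.lett M x V)
| beta_let : IsValue V → RedT (.lett M x V) (subT M x V)
| beta_mu : k ∉ fcT M → RedT (.lett M x (.mu k J)) (.mu k (csubJ J k M x))
| eta_lam : IsValue V → x ∉ fvT V → RedT (.lam x (.app V (.var x))) V
| eta_let : RedT (.lett (.var x) x M) M
| eta_mu : k ∉ fcT M → RedT (.mu k (.jmp k M)) M
| exch : k ∉ fcT M → RedT (.lett (.mu k J) x M) (.mu k (.lett J x M))
| lam : RedT M M' → RedT (.lam x M) (.lam x M')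
| appl : RedT M M' → RedT (.app M N) (.app M' N)
| appr : RedT N N' → RedT (.app M N) (.app M N')
| lettl : RedT M M' → RedT (.lett M x N) (.lett M' x N)
| lettr : RedT N N' → RedT (.lett M x N) (.lett M x N')
| mu : RedJ J J' → RedT (.mu k J) (.mu k J')
| eq : EqT M M₁ → RedT M₁ N₁ → EqT N₁ N → RedT M N
/-- one-step reduction on jumps. -/
inductive RedJ : Jm → Jm → Prop
| beta_jmp : RedJ (.jmp l (.mu k J)) (renKJ J k l)
| jmp : RedT M M' → RedJ (.jmp k M) (.jmp k M')
| lettl : RedJ J J' → RedJ (.lett J x N) (.lett J' x N)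
| lettr : RedT N N' → RedJ (.lett J x N) (.lett J x N')
| eq : EqJ J J₁ → RedJ J₁ J₁' → EqJ J₁' J' → RedJ J J'
end

/-- strong normalization of `a` w.r.t. relation `r`. -/
def SNrel {α : Sort*} (r : α → α → Prop) (a : α) : Prop :=
  Acc (fun x y => r y x) a
mutual
/-- one-step reduction by rules βμ, βjmp, ημ only. -/
inductive MRedT : Tm → Tm → Prop
| beta_mu : k ∉ fcT M → MRedT (.lett M x (.mu k J)) (.mu k (csubJ J k M x))
| eta_mu : k ∉ fcT M → MRedT (.mu k (.jmp k M)) M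
| lam : MRedT M M' → MRedT (.lam x M) (.lam x M')
| appl : MRedT M M' → MRedT (.app M N) (.app M' N)
| appr : MRedT N N' → MRedT (.app M N) (.app M N')
| lettl : MRedT M M' → MRedT (.lett M x N) (.lett M' x N)
| lettr : MRedT N N' → MRedT (.lett M x N) (.lett M x N')
| mu : MRedJ J J' → MRedT (.mu k J) (.mu k J')
| eq : EqT M M₁ → MRedT M₁ N₁ → EqT N₁ N → MRedT M N
inductive MRedJ : Jm → Jm → Prop
| beta_jmp : MRedJ (.jmp l (.mu k J)) (renKJ J k l)
| jmp : MRedT M M' → MRedJ (.jmp k M) (.jmp k M')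
| lettl : MRedJ J J' → MRedJ (.lett J x N) (.lett J' x N)
| lettr : MRedT N N' → MRedJ (.lett J x N) (.lett J x N')
| eq : EqJ J J₁ → MRedJ J₁ J₁' → EqJ J₁' J' → MRedJ J J'
end

mutual
/-- one-step reduction by the non-η rules (ad1, ad2, βλ, βlet, βμ, βjmp, exch). -/
inductive NRedT : Tm → Tm → Prop
| ad1 : ¬ IsValue N → z ∉ fvT N → z ∉ fvT M →
    NRedT (.app N M) (.lett (.app (.var z) M) z N)
| ad2 : IsValue V → ¬ IsValue N → z ∉ fvT V → z ∉ fvT N →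
    NRedT (.app V N) (.lett (.app V (.var z)) z N)
| beta_lam : IsValue V → NRedT (.app (.lam x M) V) (.lett M x V)
| beta_let : IsValue V → NRedT (.lett M x V) (subT M x V)
| beta_mu : k ∉ fcT M → NRedT (.lett M x (.mu k J)) (.mu k (csubJ J k M x))
| exch : k ∉ fcT M → NRedT (.lett (.mu k J) x M) (.mu k (.lett J x M))
| lam : NRedT M M' → NRedT (.lam x M) (.lam x M')
| appl : NRedT M M' → NRedT (.app M N) (.app M' N)
| appr : NRedT N N' → NRedT (.app M N) (.app M N')
| lettl : NRedT M M' → NRedT (.lett M x N) (.lett M' x N)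
| lettr : NRedT N N' → NRedT (.lett M x N) (.lett M x N')
| mu : NRedJ J J' → NRedT (.mu k J) (.mu k J')
| eq : EqT M M₁ → NRedT M₁ N₁ → EqT N₁ N → NRedT M N
inductive NRedJ : Jm → Jm → Prop
| beta_jmp : NRedJ (.jmp l (.mu k J)) (renKJ J k l)
| jmp : NRedT M M' → NRedJ (.jmp k M) (.jmp k M')
| lettl : NRedJ J J' → NRedJ (.lett J x N) (.lett J' x N)
| lettr : NRedT N N' → NRedJ (.lett J x N) (.lett J x N')
| eq : EqJ J J₁ → NRedJ J₁ J₁' → EqJ J₁' J' → NRedJ J J'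
end

/-- a top-level (root) instance of one of the nine term-level reduction rules. -/
inductive TopRed : Tm → Tm → Prop
| ad1 : ¬ IsValue N → z ∉ fvT N → z ∉ fvT M →
    TopRed (.app N M) (.lett (.app (.var z) M) z N)
| ad2 : IsValue V → ¬ IsValue N → z ∉ fvT V → z ∉ fvT N →
    TopRed (.app V N) (.lett (.app V (.var z)) z N)
| beta_lam : IsValue V → TopRed (.app (.lam x M) V) (.lett M x V)
| beta_let : IsValue V → TopRed (.lett M x V) (subT M x V)
| beta_mu : k ∉ fcT M → TopRed (.lett M x (.mu k J)) (.mu k (csubJ J k M x))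
| eta_lam : IsValue V → x ∉ fvT V → TopRed (.lam x (.app V (.var x))) V
| eta_let : TopRed (.lett (.var x) x M) M
| eta_mu : k ∉ fcT M → TopRed (.mu k (.jmp k M)) M
| exch : k ∉ fcT M → TopRed (.lett (.mu k J) x M) (.mu k (.lett J x M))

/-- a root rule instance, with βjmp taken in the form `μm.[l]μk.J → μm.J{l/k}`. -/
inductive RootR : Tm → Tm → Prop
| top : TopRed R S → RootR R S
| jmpwrap (m l k : ℕ) (J : Jm) :
    RootR (.mu m (.jmp l (.mu k J))) (.mu m (renKJ J k l))

/-- evaluation contexts `E ::= □ | E[V □] | E[□ M] | E[(M where x := □)]`. -/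
inductive ECtx : Type
| hole : ECtx
| appV (E : ECtx) (V : Tm) (h : IsValue V) : ECtx
| appM (E : ECtx) (N : Tm) : ECtx
| lettArg (E : ECtx) (M : Tm) (x : ℕ) : ECtx

/-- plugging a term into an evaluation context. -/
def fill : ECtx → Tm → Tm
| .hole, M => M
| .appV E V _, M => fill E (.app V M)
| .appM E N, M => fill E (.app M N)
| .lettArg E L x, M => fill E (.lett L x M)
mutual
inductive RTy : Type
| atom (n : ℕ) : RTy
| arrow (S : STy) (T : TTy) : RTy
inductive STy : Type
| single (R : RTy) : STy
| inter (R : RTy) (S : STy) : STy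
inductive TTy : Type
| single (S : STy) : TTy
| union (S : STy) (T : TTy) : TTy
end
mutual
inductive SubR : RTy → RTy → Prop
| atom (n : ℕ) : SubR (.atom n) (.atom n)
| arrow : SubS S' S → SubT T T' → SubR (.arrow S T) (.arrow S' T')
inductive SubSR : STy → RTy → Prop
| head1 : SubR R R' → SubSR (.single R) R'
| head : SubR R R' → SubSR (.inter R S) R'
| tail : SubSR S R' → SubSR (.inter R S) R'
inductive SubS : STy → STy → Prop
| single : SubSR S R' → SubS S (.single R')
| inter : SubSR S R' → SubS S S' → SubS S (.inter R' S')
inductive SubTS : STy → TTy → Prop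
| head1 : SubS S S' → SubTS S (.single S')
| head : SubS S S' → SubTS S (.union S' T')
| tail : SubTS S T' → SubTS S (.union S' T')
inductive SubT : TTy → TTy → Prop
| single : SubTS S T' → SubT (.single S) T'
| union : SubTS S T' → SubT T T' → SubT (.union S T) T'
end

/-- a nonempty intersection `⋂ (R :: l)` -/
def interList : RTy → List RTy → STy
| R, [] => .single R
| R, R' :: l => .inter R (interList R' l)

/-- a nonempty union `⋃ (S :: l)` -/
def unionList : STy → List STy → TTy
| S, [] => .single S
| S, S' :: l => .union S (unionList S' l)

/-- `⋂_i (Sᵢ → T)` for the family given by `hd :: tl`. -/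
def arrowsInter (T : TTy) (hd : STy) (tl : List STy) : STy :=
  interList (.arrow hd T) (tl.map fun S => .arrow S T)

def upd {α : Type} (f : ℕ → Option α) (x : ℕ) (v : Option α) : ℕ → Option α :=
  fun y => if y = x then v else f y

mutual
/-- The union-intersection typing judgment `Γ ⊢ M : T | Δ`. -/
inductive TyT : (ℕ → Option STy) → (ℕ → Option TTy) → Tm → TTy → Prop
| var : Γ x = some S → TyT Γ Δ (.var x) (.single S)
| lam (hd : STy × TTy) (tl : List (STy × TTy)) :
    (∀ p ∈ hd :: tl, TyT (upd Γ x (some p.1)) Δ M p.2) →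
    TyT Γ Δ (.lam x M) (.single (interList (.arrow hd.1 hd.2)
      (tl.map fun p => .arrow p.1 p.2)))
| app (hd : STy × List STy) (tl : List (STy × List STy)) :
    TyT Γ Δ M (unionList (arrowsInter T hd.1 hd.2)
      (tl.map fun p => arrowsInter T p.1 p.2)) →
    (∀ p ∈ hd :: tl, TyT Γ Δ N (unionList p.1 p.2)) →
    TyT Γ Δ (.app M N) T
| lett (hd : STy) (tl : List STy) :
    (∀ S ∈ hd :: tl, TyT (upd Γ x (some S)) Δ M T) →
    TyT Γ Δ N (unionList hd tl) →
    TyT Γ Δ (.lett M x N) T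
| mu : TyJ Γ (upd Δ k (some T)) J → TyT Γ Δ (.mu k J) T
| sub : TyT Γ Δ M T → SubT T T' → TyT Γ Δ M T'
| eq : EqT M M' → TyT Γ Δ M' T → TyT Γ Δ M T
/-- The judgment `Γ ⊢ J : ⊥⊥ | Δ` for jumps. -/
inductive TyJ : (ℕ → Option STy) → (ℕ → Option TTy) → Jm → Prop
| jmp : Δ k = some T → TyT Γ Δ M T → TyJ Γ Δ (.jmp k M)
| lett (hd : STy) (tl : List STy) :
    (∀ S ∈ hd :: tl, TyJ (upd Γ x (some S)) Δ J) →
    TyT Γ Δ N (unionList hd tl) →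
    TyJ Γ Δ (.lett J x N)
| eq : EqJ J J' → TyJ Γ Δ J' → TyJ Γ Δ J
end
/-! ### The sorted target calculus -/
mutual
inductive TgT : Type
| lamk (k : ℕ) (Q : TgQ) : TgT
| app (W W' : TgW) : TgT
inductive TgQ : Type
| kw (K : TgK) (W : TgW) : TgQ
| tk (T : TgT) (K : TgK) : TgQ
inductive TgW : Type
| var (x : ℕ) : TgW
| lam (x : ℕ) (T : TgT) : TgW
inductive TgK : Type
| kvar (k : ℕ) : TgK
| lam (x : ℕ) (Q : TgQ) : TgK
end

mutual
def fvtT : TgT → Finset ℕ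
| .lamk _ Q => fvtQ Q
| .app W W' => fvtW W ∪ fvtW W'
def fvtQ : TgQ → Finset ℕ
| .kw K W => fvtK K ∪ fvtW W
| .tk T K => fvtT T ∪ fvtK K
def fvtW : TgW → Finset ℕ
| .var x => {x}
| .lam x T => fvtT T \ {x}
def fvtK : TgK → Finset ℕ
| .kvar _ => ∅
| .lam x Q => fvtQ Q \ {x}
end

mutual
def fktT : TgT → Finset ℕ
| .lamk k Q => fktQ Q \ {k}
| .app W W' => fktW W ∪ fktW W'
def fktQ : TgQ → Finset ℕ
| .kw K W => fktK K ∪ fktW W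
| .tk T K => fktT T ∪ fktK K
def fktW : TgW → Finset ℕ
| .var _ => ∅
| .lam _ T => fktT T
def fktK : TgK → Finset ℕ
| .kvar k => {k}
| .lam _ Q => fktQ Q
end

mutual
def wsT : TgT → ℕ → TgW → TgT
| .lamk k Q, x, W => .lamk k (wsQ Q x W)
| .app W₁ W₂, x, W => .app (wsW W₁ x W) (wsW W₂ x W)
def wsQ : TgQ → ℕ → TgW → TgQ
| .kw K W', x, W => .kw (wsK K x W) (wsW W' x W)
| .tk T K, x, W => .tk (wsT T x W) (wsK K x W)
def wsW : TgW → ℕ → TgW → TgW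
| .var y, x, W => if y = x then W else .var y
| .lam y T, x, W => if y = x then .lam y T else .lam y (wsT T x W)
def wsK : TgK → ℕ → TgW → TgK
| .kvar k, _, _ => .kvar k
| .lam y Q, x, W => if y = x then .lam y Q else .lam y (wsQ Q x W)
end

mutual
def ksT : TgT → ℕ → TgK → TgT
| .lamk m Q, k, K => if m = k then .lamk m Q else .lamk m (ksQ Q k K)
| .app W₁ W₂, k, K => .app (ksW W₁ k K) (ksW W₂ k K)
def ksQ : TgQ → ℕ → TgK → TgQ
| .kw K' W, k, K => .kw (ksK K' k K) (ksW W k K)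
| .tk T K', k, K => .tk (ksT T k K) (ksK K' k K)
def ksW : TgW → ℕ → TgK → TgW
| .var y, _, _ => .var y
| .lam y T, k, K => .lam y (ksT T k K)
def ksK : TgK → ℕ → TgK → TgK
| .kvar m, k, K => if m = k then K else .kvar m
| .lam y Q, k, K => .lam y (ksQ Q k K)
end

mutual
/-- βη-reduction (β-only if `eta = false`) in the sorted target calculus: terms. -/
inductive StT (eta : Bool) : TgT → TgT → Prop
| etaT : eta = true → k ∉ fktT T → StT eta (.lamk k (.tk T (.kvar k))) T
| lamk : StQ eta Q Q' → StT eta (.lamk k Q) (.lamk k Q')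
| appl : StW eta W W' → StT eta (.app W W₂) (.app W' W₂)
| appr : StW eta W W' → StT eta (.app W₁ W) (.app W₁ W')
inductive StQ (eta : Bool) : TgQ → TgQ → Prop
| betaK : StQ eta (.kw (.lam x Q) W) (wsQ Q x W)
| betaT : StQ eta (.tk (.lamk k Q) K) (ksQ Q k K)
| kwl : StK eta K K' → StQ eta (.kw K W) (.kw K' W)
| kwr : StW eta W W' → StQ eta (.kw K W) (.kw K W')
| tkl : StT eta T T' → StQ eta (.tk T K) (.tk T' K)
| tkr : StK eta K K' → StQ eta (.tk T K) (.tk T K')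
inductive StW (eta : Bool) : TgW → TgW → Prop
| etaW : eta = true → x ∉ fvtW W → StW eta (.lam x (.app W (.var x))) W
| lam : StT eta T T' → StW eta (.lam x T) (.lam x T')
inductive StK (eta : Bool) : TgK → TgK → Prop
| etaK : eta = true → x ∉ fvtK K → StK eta (.lam x (.kw K (.var x))) K
| lam : StQ eta Q Q' → StK eta (.lam x Q) (.lam x Q')
end

/-- a fresh ordinary variable for the translation of applications -/
def fx (M N : Tm) (K : TgK) : ℕ := ((fvT M ∪ fvT N ∪ fvtK K).sup id) + 1

mutual
/-- the value translation `V*` (junk on non-values). -/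
def star : Tm → TgW
| .var x => .var x
| .lam x M => .lam x (.lamk ((fcT M).sup id + 1) (colon M (.kvar ((fcT M).sup id + 1))))
| _ => .var 0
/-- the colon translation `⌊M⌋[K]`. -/
def colon : Tm → TgK → TgQ
| .var x, K => .kw K (.var x)
| .lam x M, K => .kw K (star (.lam x M))
| .app M N, K =>
    if isVal M then
      if isVal N then .tk (.app (star M) (star N)) K
      else colon N (.lam (fx M N K) (.tk (.app (star M) (.var (fx M N K))) K))
    else
      if isVal N then colon M (.lam (fx M N K) (.tk (.app (.var (fx M N K)) (star N)) K))
      else colon M (.lam (fx M N K)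
        (colon N (.lam (fx M N K + 1)
          (.tk (.app (.var (fx M N K)) (.var (fx M N K + 1))) K))))
| .lett L x N, K => colon N (.lam x (colon L K))
| .mu k J, K => .tk (.lamk k (colonJ J)) K
/-- the colon translation `⌊J⌋` of jumps. -/
def colonJ : Jm → TgQ
| .jmp k M => colon M (.kvar k)
| .lett J x N => colon N (.lam x (colonJ J))
end

/-- the CPS translation `[[M]] = λk.⌊M⌋[k]`. -/
def cps (M : Tm) : TgT :=
  .lamk ((fcT M).sup id + 1) (colon M (.kvar ((fcT M).sup id + 1)))
/-! ### The untyped λ-calculus extended with an associative dot operator.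
Variables are coded: ordinary `x ↦ 3x`, continuation `k ↦ 3k+1`,
and the tilde companion `k̃ ↦ 3k+2`. -/
inductive Lam : Type
| var (x : ℕ) : Lam
| lam (x : ℕ) (M : Lam) : Lam
| app (M N : Lam) : Lam
| dot (M N : Lam) : Lam

def fvL : Lam → Finset ℕ
| .var x => {x}
| .lam x M => fvL M \ {x}
| .app M N => fvL M ∪ fvL N
| .dot M N => fvL M ∪ fvL N

/-- parallel (capture-naive) substitution. -/
def psub : Lam → (ℕ → Option Lam) → Lam
| .var x, ρ => (ρ x).getD (.var x)
| .lam x M, ρ => .lam x (psub M (fun y => if y = x then none else ρ y))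
| .app M N, ρ => .app (psub M ρ) (psub N ρ)
| .dot M N, ρ => .dot (psub M ρ) (psub N ρ)

def sub1 (M : Lam) (x : ℕ) (N : Lam) : Lam :=
  psub M (fun y => if y = x then some N else none)

/-- syntactic associativity of the dot operator (congruence-equivalence closure). -/
inductive DEq : Lam → Lam → Prop
| refl (M) : DEq M M
| symm : DEq M N → DEq N M
| trans : DEq M N → DEq N P → DEq M P
| assoc (L M N) : DEq (.dot (.dot L M) N) (.dot L (.dot M N))
| lam : DEq M M' → DEq (.lam x M) (.lam x M')
| appl : DEq M M' → DEq N N' → DEq (.app M N) (.app M' N')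
| dot : DEq M M' → DEq N N' → DEq (.dot M N) (.dot M' N')

/-- βη-reduction together with dot-elimination `M·N → N`,
    on dot-associativity classes. -/
inductive LStep : Lam → Lam → Prop
| beta : LStep (.app (.lam x M) N) (sub1 M x N)
| eta : x ∉ fvL M → LStep (.lam x (.app M (.var x))) M
| dotElim (M N) : LStep (.dot M N) N
| lam : LStep M M' → LStep (.lam x M) (.lam x M')
| appl : LStep M M' → LStep (.app M N) (.app M' N)
| appr : LStep N N' → LStep (.app M N) (.app M N')
| dotl : LStep M M' → LStep (.dot M N) (.dot M' N)
| dotr : LStep N N' → LStep (.dot M N) (.dot M N')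
| deq : DEq M M₁ → LStep M₁ N₁ → DEq N₁ N → LStep M N

/-- `K̃`: the tilde companion of a continuation term. -/
def til : Lam → Lam
| .var v => .var (v + 1)
| .lam _ Q => Q
| M => M

/-- continuation terms of the extended target language. -/
def IsCont (K : Lam) : Prop :=
  (∃ k : ℕ, K = .var (3 * k + 1)) ∨ (∃ (x : ℕ) (Q : Lam), K = .lam (3 * x) Q)

/-- `W K K̃ W'` -/
def appW (W K W' : Lam) : Lam := .app (.app (.app W K) (til K)) W'

/-- a fresh ordinary variable -/
def zf (M N : Tm) (K : Lam) : ℕ :=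
  (fvT M).sup id + (fvT N).sup id + (fvL K).sup id + 1

mutual
/-- the value translation `V*` of Def. 2.9 (junk on non-values). -/
def starb : Tm → Lam
| .var x => .var (3 * x)
| .lam x M =>
    let kk := (fcT M).sup id + 1
    .lam (3 * kk + 1) (.lam (3 * kk + 2) (.lam (3 * x)
      (.dot (trb M (.var (3 * kk + 1)))
        (.app (.lam (3 * x) (.dot (.var (3 * kk + 2)) (trb M (.var (3 * kk + 1)))))
          (.var (3 * x))))))
| _ => .var 0
/-- the translation `⟪M⟫[K]`. -/
def trb : Tm → Lam → Lam
| .var x, K => .app K (.var (3 * x))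
| .lam x M, K => .app K (starb (.lam x M))
| .app M N, K =>
    if isVal M then
      if isVal N then appW (starb M) K (starb N)
      else
        let z := zf M N K
        let Q' := appW (starb M) K (.var (3 * z))
        .dot (til K) (.dot Q' (trb N (.lam (3 * z) (.dot (til K) Q'))))
    else
      let z := zf M N K
      let ZQ :=
        if isVal N then appW (.var (3 * z)) K (starb N)
        else
          let w := z + 1
          let Q'' := appW (.var (3 * z)) K (.var (3 * w))
          .dot (til K) (.dot Q'' (trb N (.lam (3 * w) (.dot (til K) Q''))))
      .dot (til K) (.dot ZQ (trb M (.lam (3 * z) (.dot (til K) ZQ))))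
| .lett L x N, K =>
    .dot (trb L K) (trb N (.lam (3 * x) (.dot (til K) (trb L K))))
| .mu k J, K =>
    .dot (til K) (psub (trbJ J)
      (fun v => if v = 3 * k + 1 then some K
                else if v = 3 * k + 2 then some (til K) else none))
/-- the translation `⟪J⟫` of jumps. -/
def trbJ : Jm → Lam
| .jmp k M => .dot (.var (3 * k + 2)) (trb M (.var (3 * k + 1)))
| .lett J x N => .dot (trbJ J) (trb N (.lam (3 * x) (trbJ J)))
end

/-- prepend an optional ("possibly void") jump with the dot operator. -/
def odot : Option Lam → Lam → Lam
| none, P => P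
| some Q, P => .dot Q P

/-! ### Intersection types for the extended λ-calculus (no empty intersection). -/
mutual
inductive ISt : Type
| atom (n : ℕ) : ISt
| bot : ISt
| arrow (t : ITy) (s : ISt) : ISt
inductive ITy : Type
| single (s : ISt) : ITy
| inter (s : ISt) (t : ITy) : ITy
end

def memI : ISt → ITy → Prop
| s, .single s' => s = s'
| s, .inter s' t => s = s' ∨ memI s t

mutual
inductive ISubS : ISt → ISt → Prop
| atom (n : ℕ) : ISubS (.atom n) (.atom n)
| bot : ISubS .bot .bot
| arrow : ISubT t' t → ISubS s s' → ISubS (.arrow t s) (.arrow t' s')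
inductive ISubTS : ITy → ISt → Prop
| head1 : ISubS s s' → ISubTS (.single s) s'
| head : ISubS s s' → ISubTS (.inter s t) s'
| tail : ISubTS t s' → ISubTS (.inter s t) s'
inductive ISubT : ITy → ITy → Prop
| single : ISubTS t s' → ISubT t (.single s')
| inter : ISubTS t s' → ISubT t t' → ISubT t (.inter s' t')
end

/-- the intersection type system of the extended λ-calculus with the dot rule. -/
inductive ITJ : (ℕ → Option ITy) → Lam → ISt → Prop
| var : Γ x = some t → memI s t → ITJ Γ (.var x) s
| lam : ITJ (upd Γ x (some t)) M s → ITJ Γ (.lam x M) (.arrow t s)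
| app : ITJ Γ M (.arrow t s) → (∀ s', memI s' t → ITJ Γ N s') → ITJ Γ (.app M N) s
| dot : ITJ Γ M .bot → ITJ Γ N .bot → ITJ Γ (.dot M N) .bot
| sub : ITJ Γ M s → ISubS s s' → ITJ Γ M s'
| deq : DEq M M' → ITJ Γ M' s → ITJ Γ M s

mutual
def CompS : ISt → Set Lam
| .atom _ => {M | SNrel LStep M}
| .bot => {M | SNrel LStep M}
| .arrow t s => {M | ∀ N ∈ CompT t, Lam.app M N ∈ CompS s}
def CompT : ITy → Set Lam
| .single s => CompS s
| .inter s t => CompS s ∩ CompT t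
end

mutual
/-- `R*` -/
def trR : RTy → ISt
| .atom n => .atom n
| .arrow S T => .arrow (trTp T) (.arrow (.single .bot) (.arrow (trS S) .bot))
/-- `S*` -/
def trS : STy → ITy
| .single R => .single (trR R)
| .inter R S => .inter (trR R) (trS S)
/-- `T⁺ = ⋂ ¬S*` -/
def trTp : TTy → ITy
| .single S => .single (.arrow (trS S) .bot)
| .union S T => .inter (.arrow (trS S) .bot) (trTp T)
end
/-! ### sorted intersection types for the target calculus -/
mutual
inductive SSg : Type          -- strict value types σ
| atom (n : ℕ) : SSg
| arrow (s : SSgI) (t : STa) : SSg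
inductive SSgI : Type         -- σ̲ = ⋂σ
| single (g : SSg) : SSgI
| inter (g : SSg) (s : SSgI) : SSgI
inductive SKa : Type          -- continuation types κ = ¬σ̲
| neg (s : SSgI) : SKa
inductive SKaI : Type         -- κ̲ = ⋂κ
| single (k : SKa) : SKaI
| inter (k : SKa) (t : SKaI) : SKaI
inductive STa : Type          -- term types τ = ¬κ̲
| neg (k : SKaI) : STa
end

def memSg : SSg → SSgI → Prop
| g, .single g' => g = g'
| g, .inter g' s => g = g' ∨ memSg g s

def memKa : SKa → SKaI → Prop
| k, .single k' => k = k'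
| k, .inter k' t => k = k' ∨ memKa k t

mutual
inductive SubSg : SSg → SSg → Prop
| atom (n : ℕ) : SubSg (.atom n) (.atom n)
| arrow : SubSgI s' s → SubTa t t' → SubSg (.arrow s t) (.arrow s' t')
inductive SubSgIm : SSgI → SSg → Prop
| head1 : SubSg g g' → SubSgIm (.single g) g'
| head : SubSg g g' → SubSgIm (.inter g s) g'
| tail : SubSgIm s g' → SubSgIm (.inter g s) g'
inductive SubSgI : SSgI → SSgI → Prop
| single : SubSgIm s g' → SubSgI s (.single g')
| inter : SubSgIm s g' → SubSgI s s' → SubSgI s (.inter g' s')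
inductive SubKa : SKa → SKa → Prop
| neg : SubSgI s' s → SubKa (.neg s) (.neg s')
inductive SubKaIm : SKaI → SKa → Prop
| head1 : SubKa k k' → SubKaIm (.single k) k'
| head : SubKa k k' → SubKaIm (.inter k t) k'
| tail : SubKaIm t k' → SubKaIm (.inter k t) k'
inductive SubKaI : SKaI → SKaI → Prop
| single : SubKaIm t k' → SubKaI t (.single k')
| inter : SubKaIm t k' → SubKaI t t' → SubKaI t (.inter k' t')
inductive SubTa : STa → STa → Prop
| neg : SubKaI k' k → SubTa (.neg k) (.neg k')
end

mutual
/-- sorted intersection typing for target terms. -/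
inductive JT : (ℕ → Option SSgI) → (ℕ → Option SKaI) → TgT → STa → Prop
| lamk : JQ Pe (upd Θ k (some kk)) Q → JT Pe Θ (.lamk k Q) (.neg kk)
| app : JW Pe Θ W (.arrow s t) → (∀ g, memSg g s → JW Pe Θ W' g) →
    JT Pe Θ (.app W W') t
| sub : JT Pe Θ T t → SubTa t t' → JT Pe Θ T t'
/-- sorted typing of jumps at `⊥⊥`. -/
inductive JQ : (ℕ → Option SSgI) → (ℕ → Option SKaI) → TgQ → Prop
| kw : JK Pe Θ K (.neg s) → (∀ g, memSg g s → JW Pe Θ W g) → JQ Pe Θ (.kw K W)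
| tk : JT Pe Θ T (.neg kk) → (∀ κ, memKa κ kk → JK Pe Θ K κ) → JQ Pe Θ (.tk T K)
/-- sorted typing of values. -/
inductive JW : (ℕ → Option SSgI) → (ℕ → Option SKaI) → TgW → SSg → Prop
| var : Pe x = some s → memSg g s → JW Pe Θ (.var x) g
| lam : JT (upd Pe x (some s)) Θ T t → JW Pe Θ (.lam x T) (.arrow s t)
| sub : JW Pe Θ W g → SubSg g g' → JW Pe Θ W g'
/-- sorted typing of continuations. -/
inductive JK : (ℕ → Option SSgI) → (ℕ → Option SKaI) → TgK → SKa → Prop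
| kvar : Θ k = some kk → memKa κ kk → JK Pe Θ (.kvar k) κ
| lam : JQ (upd Pe x (some s)) Θ Q → JK Pe Θ (.lam x Q) (.neg s)
| sub : JK Pe Θ K κ → SubKa κ κ' → JK Pe Θ K κ'
end
/-! ### Places, visions, breadths and sights (cf. §2.1). -/

/-- the children of a node of the syntax tree. -/
def childs : Tm ⊕ Jm → List (Tm ⊕ Jm)
| .inl (.var _) => []
| .inl (.lam _ M) => [.inl M]
| .inl (.app M N) => [.inl M, .inl N]
| .inl (.lett M _ N) => [.inl M, .inl N]
| .inl (.mu _ J) => [.inr J]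
| .inr (.jmp _ M) => [.inl M]
| .inr (.lett J _ N) => [.inr J, .inl N]

/-- the subtree at a tree address. -/
def nodeAt : Tm ⊕ Jm → List ℕ → Option (Tm ⊕ Jm)
| X, [] => some X
| X, i :: a =>
    match (childs X)[i]? with
    | some Y => nodeAt Y a
    | none => none

/-- whether descending to child `i` introduces a fresh place symbol:
λ-bodies, jump bodies and the arguments of applications and lets do;
head positions (and μ-bodies) keep the current place. -/
def freshStep : Tm ⊕ Jm → ℕ → Bool
| .inl (.lam _ _), 0 => true
| .inl (.app _ _), 1 => true
| .inl (.lett _ _ _), 1 => true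
| .inr (.jmp _ _), 0 => true
| .inr (.lett _ _ _), 1 => true
| _, _ => false

/-- a place of `M₀`: a valid address that carries a fresh place symbol. -/
def IsPlace (M₀ : Tm) (p : List ℕ) : Prop :=
  (nodeAt (.inl M₀) p).isSome ∧
    (p = [] ∨ ∃ b i, p = b ++ [i] ∧ ∃ X, nodeAt (.inl M₀) b = some X ∧ freshStep X i)

/-- auxiliary walk computing the place marking a given address. -/
def placeWalk : Tm ⊕ Jm → List ℕ → List ℕ → List ℕ → List ℕ
| _, [], _, cur => cur
| X, i :: a, pos, cur =>
    match (childs X)[i]? with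
    | none => cur
    | some Y => placeWalk Y a (pos ++ [i]) (if freshStep X i then pos ++ [i] else cur)

/-- the place marking the node at address `a`. -/
def placeOf (M₀ : Tm) (a : List ℕ) : List ℕ := placeWalk (.inl M₀) a [] []

/-- is the node at `b` a let (term-let or jump-let)? -/
def IsLetNode : Tm ⊕ Jm → Prop
| .inl (.lett _ _ _) => True
| .inr (.lett _ _ _) => True
| _ => False

/-- `BindsAt M₀ b k c`: the innermost `μk` above the node `b` is at address `c`. -/
def BindsAt (M₀ : Tm) (b : List ℕ) (k : ℕ) (c : List ℕ) : Prop :=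
  (∃ J, nodeAt (.inl M₀) c = some (.inl (.mu k J))) ∧ c <+: b ∧ c ≠ b ∧
    ∀ d, c <+: d → d <+: b → d ≠ c → ∀ J', nodeAt (.inl M₀) d ≠ some (.inl (.mu k J'))

/-- the vision relation: `Vis M₀ p q` means `q ∈ V(p)`. -/
inductive Vis (M₀ : Tm) : List ℕ → List ℕ → Prop
| letSelf (b : List ℕ) (X : Tm ⊕ Jm) :
    nodeAt (.inl M₀) b = some X → IsLetNode X →
    Vis M₀ (b ++ [1]) (placeOf M₀ b)
| letSelfV (b : List ℕ) (X : Tm ⊕ Jm) :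
    nodeAt (.inl M₀) b = some X → IsLetNode X →
    Vis M₀ (placeOf M₀ b) r → Vis M₀ (b ++ [1]) r
| letIn (b : List ℕ) (X : Tm ⊕ Jm) (q : List ℕ) :
    nodeAt (.inl M₀) b = some X → IsLetNode X →
    IsPlace M₀ q → (b ++ [0]) <+: q →
    Vis M₀ (b ++ [1]) q
| letInV (b : List ℕ) (X : Tm ⊕ Jm) (q : List ℕ) :
    nodeAt (.inl M₀) b = some X → IsLetNode X →
    IsPlace M₀ q → (b ++ [0]) <+: q →
    Vis M₀ q r → Vis M₀ (b ++ [1]) r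
| jump (b : List ℕ) (k : ℕ) (M : Tm) (c : List ℕ) :
    nodeAt (.inl M₀) b = some (.inr (.jmp k M)) →
    BindsAt M₀ b k c →
    Vis M₀ (placeOf M₀ c) r → Vis M₀ (b ++ [0]) r

/-- chains of visible places below `p`. -/
inductive Chain (M₀ : Tm) : List ℕ → ℕ → Prop
| zero (p) : Chain M₀ p 0
| succ : Vis M₀ p q → Chain M₀ q n → Chain M₀ p (n + 1)

/-- the breadth `|p|` of a place. -/
noncomputable def breadth (M₀ : Tm) (p : List ℕ) : ℕ :=
  sSup {n | Chain M₀ p n}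

mutual
/-- addresses of all μ-subterms. -/
def muAddrsT : Tm → List (List ℕ)
| .var _ => []
| .lam _ M => (muAddrsT M).map (List.cons 0)
| .app M N => (muAddrsT M).map (List.cons 0) ++ (muAddrsT N).map (List.cons 1)
| .lett M _ N => (muAddrsT M).map (List.cons 0) ++ (muAddrsT N).map (List.cons 1)
| .mu _ J => [] :: (muAddrsJ J).map (List.cons 0)
def muAddrsJ : Jm → List (List ℕ)
| .jmp _ M => (muAddrsT M).map (List.cons 0)
| .lett J _ N => (muAddrsJ J).map (List.cons 0) ++ (muAddrsT N).map (List.cons 1)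
end

namespace NaturalOps
/-- natural (Hessenberg) addition of ordinals, as in the older Mathlib's `Ordinal.nadd`. -/
noncomputable def nadd (a b : Ordinal.{u}) : Ordinal.{u} :=
  max (⨆ x : Set.Iio a, Order.succ (nadd x.1 b)) (⨆ x : Set.Iio b, Order.succ (nadd a x.1))
termination_by (a, b)
decreasing_by all_goals cases x; decreasing_tactic
end NaturalOps

local infixl:65 " ♯ " => NaturalOps.nadd

open scoped NaturalOps in
/-- the sight of a term: the natural sum of `ω^{|p|}` over all μ-places. -/
noncomputable def sight (M₀ : Tm) : Ordinal :=
  ((muAddrsT M₀).map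
    (fun a => Ordinal.omega0 ^ (breadth M₀ (placeOf M₀ a) : Ordinal))).foldr (· ♯ ·) 0

/-! Tait's reducibility argument: by simultaneous induction on types, every strongly
normalizing neutral term `x N₁ ⋯ Nₖ` is computable, and every computable term is strongly
normalizing (apply it to a variable, which is computable by the first half). The only work
specific to this calculus is that dot-associativity preserves variables and applications, so a
step from a neutral application still reduces either its head or its argument. -/

inductive Lam.Neutral : Lam → Prop
| var (x : ℕ) : Lam.Neutral (.var x)
| app {M N : Lam} : Lam.Neutral M → Lam.Neutral (.app M N)

namespace DEq

theorem var_iff {P Q : Lam} (h : DEq P Q) (x : ℕ) : P = .var x ↔ Q = .var x := by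
  induction h <;> simp_all

theorem app_inv {V A Q : Lam} (h : DEq (.app V A) Q) :
    ∃ V' A', Q = .app V' A' ∧ DEq V V' ∧ DEq A A' := by
  suffices ∀ {P Q : Lam}, DEq P Q →
      (∀ V A, P = .app V A → ∃ V' A', Q = .app V' A' ∧ DEq V V' ∧ DEq A A') ∧
      (∀ V A, Q = .app V A → ∃ V' A', P = .app V' A' ∧ DEq V V' ∧ DEq A A') from
    (this h).1 V A rfl
  intro P Q h
  induction h with
  | refl M =>
    exact ⟨fun V A h => ⟨V, A, h, .refl V, .refl A⟩, fun V A h => ⟨V, A, h, .refl V, .refl A⟩⟩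
  | symm _ ih => exact ⟨ih.2, ih.1⟩
  | trans _ _ ih₁ ih₂ =>
    constructor
    · intro V A hP
      obtain ⟨V₁, A₁, hN, hV₁, hA₁⟩ := ih₁.1 V A hP
      obtain ⟨V₂, A₂, hQ, hV₂, hA₂⟩ := ih₂.1 V₁ A₁ hN
      exact ⟨V₂, A₂, hQ, hV₁.trans hV₂, hA₁.trans hA₂⟩
    · intro V A hQ
      obtain ⟨V₁, A₁, hN, hV₁, hA₁⟩ := ih₂.2 V A hQ
      obtain ⟨V₂, A₂, hP, hV₂, hA₂⟩ := ih₁.2 V₁ A₁ hN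
      exact ⟨V₂, A₂, hP, hV₁.trans hV₂, hA₁.trans hA₂⟩
  | @appl M M' N N' hM hN _ _ =>
    constructor
    · rintro V A ⟨⟩; exact ⟨M', N', rfl, hM, hN⟩
    · rintro V A ⟨⟩; exact ⟨M, N, rfl, hM.symm, hN.symm⟩
  | assoc | lam | dot => exact ⟨fun V A h => (nomatch h), fun V A h => (nomatch h)⟩

theorem neutral_iff {P Q : Lam} (h : DEq P Q) : P.Neutral ↔ Q.Neutral := by
  induction h with
  | refl => rfl
  | symm _ ih => exact ih.symm
  | trans _ _ ih₁ ih₂ => exact ih₁.trans ih₂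
  | appl _ _ ih _ =>
    constructor <;> rintro ⟨⟩ <;> constructor <;> simp_all
  | assoc | lam | dot => constructor <;> rintro ⟨⟩

end DEq

namespace LStep

theorem ne_var {P Q : Lam} (h : LStep P Q) (x : ℕ) : P ≠ .var x := by
  induction h
  case deq hP _ _ ih => exact fun h => ih ((hP.var_iff x).1 h)
  all_goals simp

theorem neutral {P Q : Lam} (h : LStep P Q) (hP : P.Neutral) : Q.Neutral := by
  induction h
  case beta => rcases hP with ⟨⟩ | ⟨⟨⟩⟩
  case appl ih => rcases hP with ⟨⟩ | ⟨hM⟩; exact .app (ih hM)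
  case appr => rcases hP with ⟨⟩ | ⟨hM⟩; exact .app hM
  case deq hP₁ _ hQ₁ ih => exact hQ₁.neutral_iff.1 (ih (hP₁.neutral_iff.1 hP))
  all_goals cases hP

-- A neutral head cannot form a β-redex with the argument.
theorem app_inv_of_neutral {P Q : Lam} (h : LStep P Q) {V A : Lam} (hPVA : P = .app V A)
    (hV : V.Neutral) :
    ∃ V' A', DEq Q (.app V' A') ∧ ((LStep V V' ∧ DEq A A') ∨ (DEq V V' ∧ LStep A A')) := by
  induction h generalizing V A
  case beta => cases hPVA; cases hV
  case appl h _ => cases hPVA; exact ⟨_, _, .refl _, .inl ⟨h, .refl _⟩⟩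
  case appr h _ => cases hPVA; exact ⟨_, _, .refl _, .inr ⟨.refl _, h⟩⟩
  case deq hP₁ _ hQ₁ ih =>
    obtain ⟨V₁, A₁, rfl, hV₁, hA₁⟩ := (hPVA ▸ hP₁).app_inv
    obtain ⟨V', A', hQ', hstep⟩ := ih rfl (hV₁.neutral_iff.1 hV)
    refine ⟨V', A', hQ₁.symm.trans hQ', ?_⟩
    rcases hstep with ⟨hVs, hA⟩ | ⟨hV', hAs⟩
    · exact .inl ⟨.deq hV₁ hVs (.refl _), hA₁.trans hA⟩
    · exact .inr ⟨hV₁.trans hV', .deq hA₁ hAs (.refl _)⟩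
  all_goals cases hPVA

end LStep

theorem snrel_var (x : ℕ) : SNrel LStep (.var x) :=
  ⟨_, fun _ h => absurd rfl (h.ne_var x)⟩

theorem SNrel.of_deq {M N : Lam} (h : DEq M N) (hM : SNrel LStep M) : SNrel LStep N :=
  ⟨N, fun _ hN => hM.inv (.deq h hN (.refl _))⟩

theorem SNrel.app_of_neutral {V A : Lam} (hV : SNrel LStep V) (hVn : V.Neutral)
    (hA : SNrel LStep A) : SNrel LStep (.app V A) := by
  induction hV generalizing A with
  | intro V _ ihV =>
    induction hA with
    | intro A hA ihA =>
      refine ⟨_, fun Q hQ => ?_⟩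
      obtain ⟨V', A', hQ', hstep⟩ := hQ.app_inv_of_neutral rfl hVn
      refine SNrel.of_deq hQ'.symm ?_
      rcases hstep with ⟨hVs, hA'⟩ | ⟨hV', hAs⟩
      · exact ihV V' hVs (hVs.neutral hVn) (SNrel.of_deq hA' ⟨A, hA⟩)
      · exact SNrel.of_deq (.appl hV' (.refl A')) (ihA A' hAs)

theorem SNrel.of_app {M N : Lam} (h : SNrel LStep (.app M N)) : SNrel LStep M := by
  generalize hP : Lam.app M N = P at h
  induction h generalizing M with
  | intro P _ ih => subst hP; exact ⟨M, fun M' hM' => ih _ (.appl hM') rfl⟩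

mutual

theorem neutral_mem_compS : ∀ (s : ISt) {M : Lam}, M.Neutral → SNrel LStep M → M ∈ CompS s
  | .atom _, _, _, hM | .bot, _, _, hM => hM
  | .arrow t s, _, hn, hM => fun _ hN =>
    neutral_mem_compS s (.app hn) (hM.app_of_neutral hn (snrel_of_mem_compT t hN))

theorem snrel_of_mem_compS : ∀ (s : ISt) {M : Lam}, M ∈ CompS s → SNrel LStep M
  | .atom _, _, hM | .bot, _, hM => hM
  | .arrow t s, _, hM =>
    (snrel_of_mem_compS s (hM _ (var_mem_compT t 0))).of_app

theorem var_mem_compT : ∀ (t : ITy) (x : ℕ), Lam.var x ∈ CompT t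
  | .single s, x => neutral_mem_compS s (.var x) (snrel_var x)
  | .inter s t, x => ⟨neutral_mem_compS s (.var x) (snrel_var x), var_mem_compT t x⟩

theorem snrel_of_mem_compT : ∀ (t : ITy) {M : Lam}, M ∈ CompT t → SNrel LStep M
  | .single s, _, hM => snrel_of_mem_compS s hM
  | .inter s _, _, hM => snrel_of_mem_compS s hM.1

end

/-- for every intersection type `τ`: (1) every variable belongs
to `Comp_τ`, and (2) every term in `Comp_τ` is strongly normalizable. -/
theorem comp_basic :
    (∀ (t : ITy) (x : ℕ), Lam.var x ∈ CompT t) ∧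
    (∀ (t : ITy) (M : Lam), M ∈ CompT t → SNrel LStep M) :=
  ⟨var_mem_compT, fun t _ => snrel_of_mem_compT t⟩

end CCV
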